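/- arXiv:2211.05399 — 3 statements merged into one kernel-verified Lean document; each statement's English description precedes it below -/
import Mathlib

section
/- (Bernstein inequality.) Let 1 ≤ q < ∞ and N > 0. There is a constant C = C(d,q) such that for every Schwartz function f on ℝ^d whose Fourier transform 𝓕f is supported in the closed ball {ξ : |ξ| ≤ N}, one has ‖f‖_{L^∞(ℝ^d)} ≤ C N^{d/q} ‖f‖_{L^q(ℝ^d)}. -/
/-!
Fix a Schwartz function `φ` equal to `1` on the unit ball. If `𝓕 f` is supported in the ball of
radius `N`, then `𝓕 f = φ (N⁻¹ •) · 𝓕 f`; Fourier inversion and the self-adjointness of `𝓕` turn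
this into the reproducing formula `f x = ∫ K_N (y - x) • f y` with `K_N y = N ^ d • 𝓕 φ (N • y)`.
Hölder's inequality with the dual exponent `p` gives `‖f x‖ ≤ ‖K_N‖_p ‖f‖_q`, and rescaling gives
`‖K_N‖_p = N ^ (d (1 - 1/p)) ‖𝓕 φ‖_p = N ^ (d/q) ‖𝓕 φ‖_p`. For `q = 1` the bound
`‖K_N‖_∞ = N ^ d ‖𝓕 φ‖_∞` replaces Hölder.
-/

open MeasureTheory Real FourierTransform
open scoped RealInnerProductSpace SchwartzMap

variable {V : Type*} [NormedAddCommGroup V] [InnerProductSpace ℝ V] [FiniteDimensional ℝ V]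

theorem SchwartzMap.exists_eq_one_on_closedBall :
    ∃ φ : 𝓢(V, ℂ), ∀ ξ ∈ Metric.closedBall (0 : V) 1, φ ξ = 1 := by
  let b : ContDiffBump (0 : V) := ⟨1, 2, one_pos, one_lt_two⟩
  refine ⟨(b.hasCompactSupport.comp_left Complex.ofReal_zero).toSchwartzMap
    (by exact Complex.ofRealCLM.contDiff.comp b.contDiff), fun ξ hξ => ?_⟩
  change ((b ξ : ℝ) : ℂ) = 1
  rw [b.one_of_mem_closedBall hξ, Complex.ofReal_one]

variable [MeasurableSpace V] [BorelSpace V] {E : Type*} [NormedAddCommGroup E] [NormedSpace ℂ E]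

namespace Real

theorem fourier_comp_inv_smul (g : V → E) {N : ℝ} (hN : N ≠ 0) (w : V) :
    𝓕 (fun ξ => g (N⁻¹ • ξ)) w = |N ^ Module.finrank ℝ V| • 𝓕 g (N • w) := by
  have hinner (ξ : V) : ⟪N⁻¹ • ξ, N • w⟫ = ⟪ξ, w⟫ := by
    rw [real_inner_smul_left, real_inner_smul_right, inv_mul_cancel_left₀ hN]
  rw [fourier_eq, fourier_eq, ← Measure.integral_comp_inv_smul]
  simp_rw [hinner]

theorem fourier_fourierChar_smul (g : V → E) (x y : V) :
    𝓕 (fun ξ => 𝐞 ⟪ξ, x⟫ • g ξ) y = 𝓕 g (y - x) := by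
  simp only [fourier_eq, smul_smul, ← AddChar.map_add_eq_mul]
  congr! 4 with v
  rw [inner_sub_right]
  ring

end Real

namespace SchwartzMap

variable (φ : 𝓢(V, ℂ)) {N : ℝ}

noncomputable def cutoffKernel (N : ℝ) (y : V) : ℂ :=
  (N ^ Module.finrank ℝ V : ℝ) • 𝓕 φ (N • y)

theorem eq_integral_cutoffKernel_smul [CompleteSpace E]
    (hφ : ∀ ξ ∈ Metric.closedBall (0 : V) 1, φ ξ = 1) (hN : 0 < N) (f : 𝓢(V, E))
    (hf : Function.support (𝓕 (⇑f)) ⊆ Metric.closedBall 0 N) (x : V) :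
    f x = ∫ y, cutoffKernel φ N (y - x) • f y := by
  set h : V → ℂ := fun ξ => 𝐞 ⟪ξ, x⟫ • φ (N⁻¹ • ξ) with h_def
  have h_integrable : Integrable h := by
    have := (integrable_comp_smul_iff volume φ (inv_ne_zero hN.ne')).2 φ.integrable
    simpa using (Real.fourierIntegral_convergent_iff (-x)).2 this
  have fourier_h (y : V) : 𝓕 h y = cutoffKernel φ N (y - x) := by
    rw [h_def, fourier_fourierChar_smul (fun ξ => φ (N⁻¹ • ξ)), fourier_comp_inv_smul _ hN.ne',
      abs_of_pos (by positivity)]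
    rfl
  have cutoff_eq_one (ξ : V) : 𝐞 ⟪ξ, x⟫ • 𝓕 f ξ = h ξ • 𝓕 f ξ := by
    by_cases hξ : 𝓕 f ξ = 0
    · simp [hξ]
    have hξN : ‖N⁻¹ • ξ‖ ≤ 1 := by
      rw [norm_smul, norm_inv, Real.norm_of_nonneg hN.le, inv_mul_le_iff₀ hN, mul_one]
      exact mem_closedBall_zero_iff.1 (hf hξ)
    change _ = (𝐞 ⟪ξ, x⟫ • φ (N⁻¹ • ξ)) • 𝓕 f ξ
    rw [hφ _ (mem_closedBall_zero_iff.2 hξN)]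
    simp [Circle.smul_def]
  calc f x = 𝓕⁻ (𝓕 f) x := by rw [fourierInv_fourier_eq]
    _ = ∫ ξ, 𝐞 ⟪ξ, x⟫ • 𝓕 f ξ := by rw [fourierInv_coe, fourier_coe, fourierInv_eq]
    _ = ∫ ξ, h ξ • 𝓕 f ξ := by simp_rw [cutoff_eq_one]
    _ = ∫ y, 𝓕 h y • f y := by
      have := VectorFourier.integral_fourierIntegral_smul_eq_flip (L := innerₗ V)
        continuous_fourierChar continuous_inner h_integrable (f.integrable (μ := volume))
      rw [flip_innerₗ] at this
      exact this.symm
    _ = _ := by simp_rw [fourier_h]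

theorem norm_cutoffKernel_le (hN : 0 ≤ N) (y : V) :
    ‖cutoffKernel φ N y‖ ≤ N ^ Module.finrank ℝ V * SchwartzMap.seminorm ℝ 0 0 (𝓕 φ) := by
  rw [cutoffKernel, norm_smul, Real.norm_of_nonneg (by positivity)]
  gcongr
  exact (𝓕 φ).norm_le_seminorm ℝ _

theorem memLp_cutoffKernel_comp_sub (hN : N ≠ 0) (x : V) (p : ENNReal) :
    MemLp (fun y => cutoffKernel φ N (y - x)) p := by
  let dilation : V ≃L[ℝ] V := (LinearEquiv.smulOfNeZero ℝ V N hN).toContinuousLinearEquiv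
  exact (((compSubConstCLM ℝ x) (compCLMOfContinuousLinearEquiv ℝ dilation (𝓕 φ))).memLp
    p).const_smul (N ^ Module.finrank ℝ V : ℝ)

theorem integral_norm_cutoffKernel_comp_sub_rpow (hN : 0 < N) (x : V) (p : ℝ) :
    ∫ y, ‖cutoffKernel φ N (y - x)‖ ^ p =
      N ^ ((Module.finrank ℝ V : ℝ) * (p - 1)) * ∫ ξ, ‖𝓕 φ ξ‖ ^ p := by
  have hNd : N ^ Module.finrank ℝ V = N ^ (Module.finrank ℝ V : ℝ) := (Real.rpow_natCast _ _).symm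
  simp_rw [cutoffKernel, norm_smul, norm_pow, Real.norm_of_nonneg hN.le,
    Real.mul_rpow (pow_nonneg hN.le _) (norm_nonneg _)]
  rw [integral_const_mul, integral_sub_right_eq_self (fun y => ‖𝓕 φ (N • y)‖ ^ p) x,
    Measure.integral_comp_smul_of_nonneg volume (fun y => ‖𝓕 φ y‖ ^ p) N (hR := hN.le),
    smul_eq_mul, ← mul_assoc, hNd, ← Real.rpow_mul hN.le, ← Real.rpow_neg hN.le,
    ← Real.rpow_add hN]
  congr 2
  ring

variable [CompleteSpace E]

theorem norm_le_integral_norm_cutoffKernel_mul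
    (hφ : ∀ ξ ∈ Metric.closedBall (0 : V) 1, φ ξ = 1) (hN : 0 < N)
    (f : 𝓢(V, E)) (hf : Function.support (𝓕 (⇑f)) ⊆ Metric.closedBall 0 N) (x : V) :
    ‖f x‖ ≤ ∫ y, ‖cutoffKernel φ N (y - x)‖ * ‖f y‖ := by
  rw [eq_integral_cutoffKernel_smul φ hφ hN f hf x]
  simpa only [norm_smul] using
    norm_integral_le_integral_norm fun y => cutoffKernel φ N (y - x) • f y

theorem norm_le_mul_integral_norm_of_fourier_support_subset
    (hφ : ∀ ξ ∈ Metric.closedBall (0 : V) 1, φ ξ = 1) (hN : 0 < N)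
    (f : 𝓢(V, E)) (hf : Function.support (𝓕 (⇑f)) ⊆ Metric.closedBall 0 N) (x : V) :
    ‖f x‖ ≤ SchwartzMap.seminorm ℝ 0 0 (𝓕 φ) * N ^ Module.finrank ℝ V * ∫ y, ‖f y‖ :=
  calc ‖f x‖ ≤ ∫ y, ‖cutoffKernel φ N (y - x)‖ * ‖f y‖ :=
        norm_le_integral_norm_cutoffKernel_mul φ hφ hN f hf x
    _ ≤ ∫ y, (N ^ Module.finrank ℝ V * SchwartzMap.seminorm ℝ 0 0 (𝓕 φ)) * ‖f y‖ := by
        refine integral_mono_of_nonneg (.of_forall fun y => by positivity)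
          (f.integrable.norm.const_mul _) (.of_forall fun y => ?_)
        exact mul_le_mul_of_nonneg_right (norm_cutoffKernel_le φ hN.le _) (norm_nonneg _)
    _ = _ := by rw [integral_const_mul]; ring

theorem norm_le_mul_integral_norm_rpow_of_fourier_support_subset
    (hφ : ∀ ξ ∈ Metric.closedBall (0 : V) 1, φ ξ = 1) (hN : 0 < N)
    (f : 𝓢(V, E)) (hf : Function.support (𝓕 (⇑f)) ⊆ Metric.closedBall 0 N) (x : V) {p q : ℝ}
    (hpq : q.HolderConjugate p) :
    ‖f x‖ ≤ (∫ ξ, ‖𝓕 φ ξ‖ ^ p) ^ (1 / p) * N ^ ((Module.finrank ℝ V : ℝ) / q) *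
      (∫ y, ‖f y‖ ^ q) ^ (1 / q) := by
  have hexp : (Module.finrank ℝ V : ℝ) * (p - 1) * (1 / p) = Module.finrank ℝ V / q := by
    have := hpq.inv_add_inv_eq_one
    field_simp [hpq.pos.ne', hpq.symm.pos.ne'] at this ⊢
    linear_combination (-(Module.finrank ℝ V : ℝ)) * this
  calc ‖f x‖ ≤ ∫ y, ‖cutoffKernel φ N (y - x)‖ * ‖f y‖ :=
        norm_le_integral_norm_cutoffKernel_mul φ hφ hN f hf x
    _ ≤ (∫ y, ‖cutoffKernel φ N (y - x)‖ ^ p) ^ (1 / p) * (∫ y, ‖f y‖ ^ q) ^ (1 / q) :=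
        integral_mul_le_Lp_mul_Lq_of_nonneg hpq.symm (.of_forall fun y => norm_nonneg _)
          (.of_forall fun y => norm_nonneg _) (memLp_cutoffKernel_comp_sub φ hN.ne' x _).norm
          (f.memLp _).norm
    _ = _ := by
        rw [integral_norm_cutoffKernel_comp_sub_rpow φ hN, Real.mul_rpow (by positivity)
          (by positivity), ← Real.rpow_mul hN.le, hexp]
        ring

end SchwartzMap

theorem bernstein_inequality_general (d : ℕ) (q : ℝ) (hq : 1 ≤ q) :
    ∃ C : ℝ, 0 < C ∧ ∀ (N : ℝ), 0 < N →
      ∀ f : SchwartzMap (EuclideanSpace ℝ (Fin d)) ℂ,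
        Function.support (𝓕 (⇑f)) ⊆ Metric.closedBall (0 : EuclideanSpace ℝ (Fin d)) N →
        ∀ x : EuclideanSpace ℝ (Fin d),
          ‖f x‖ ≤ C * N ^ ((d : ℝ) / q) *
            (∫ y : EuclideanSpace ℝ (Fin d), ‖f y‖ ^ q) ^ (1 / q) := by
  obtain ⟨φ, hφ⟩ := SchwartzMap.exists_eq_one_on_closedBall (V := EuclideanSpace ℝ (Fin d))
  rcases hq.eq_or_lt with rfl | hq
  · refine ⟨SchwartzMap.seminorm ℝ 0 0 (𝓕 φ) + 1, by positivity, fun N hN f hf x => ?_⟩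
    have h := φ.norm_le_mul_integral_norm_of_fourier_support_subset hφ hN f hf x
    rw [finrank_euclideanSpace_fin] at h
    simp only [div_one, Real.rpow_one, Real.rpow_natCast]
    exact h.trans (by gcongr; linarith)
  · refine ⟨(∫ ξ, ‖𝓕 φ ξ‖ ^ q.conjExponent) ^ (1 / q.conjExponent) + 1, by positivity,
      fun N hN f hf x => ?_⟩
    have h := φ.norm_le_mul_integral_norm_rpow_of_fourier_support_subset hφ hN f hf x
      (Real.HolderConjugate.conjExponent hq)
    rw [finrank_euclideanSpace_fin] at h
    exact h.trans (by gcongr; linarith)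

/-- Bernstein inequality: for `1 ≤ q < ∞` there is `C = C(d,q)` such that every Schwartz
function `f` on `ℝ^d` with `𝓕f` supported in the ball of radius `N > 0` satisfies
`‖f‖_{L^∞} ≤ C N^{d/q} ‖f‖_{L^q}`. -/
theorem bernstein_inequality (d : ℕ) (hd : 1 ≤ d) (q : ℝ) (hq : 1 ≤ q) :
    ∃ C : ℝ, 0 < C ∧ ∀ (N : ℝ), 0 < N →
      ∀ f : SchwartzMap (EuclideanSpace ℝ (Fin d)) ℂ,
        Function.support (𝓕 (⇑f)) ⊆ Metric.closedBall (0 : EuclideanSpace ℝ (Fin d)) N →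
        ∀ x : EuclideanSpace ℝ (Fin d),
          ‖f x‖ ≤ C * N ^ ((d : ℝ) / q) *
            (∫ y : EuclideanSpace ℝ (Fin d), ‖f y‖ ^ q) ^ (1 / q) :=
  bernstein_inequality_general d q hq
end

section
/- (Stein–Weiss kernel lemma.) Let 1 < q < ∞ and 0 < s < d − d/q. Define, for a measurable function g on ℝ^d, Ug(x) = |x|^{s−d} ∫_{{|y| ≤ |x|/2}} |g(y)| |y|^{−s} dy. Then there is a constant C = C(d,s,q) such that ∫_{ℝ^d} |Ug(x)|^q dx ≤ C ∫_{ℝ^d} |g(x)|^q dx for every g ∈ L^q(ℝ^d). -/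
/-!
Put `n = dim E` and `b = n - n/q - s > 0`, and let `p` be the exponent conjugate to `q`. Splitting
`‖y‖^(-s) = ‖y‖^((b-n)/p) ‖y‖^(b/q)` and applying Hölder on the ball `‖y‖ ≤ ‖x‖/2`, where polar
coordinates give `∫ ‖y‖^(b-n) = κ ‖x‖^b`, yields
`(U f x)^q ≤ κ^(q-1) ‖x‖^(-b-n) ∫_{‖y‖ ≤ ‖x‖/2} f(y)^q ‖y‖^b`.
Integrating in `x` and exchanging the integrals, the inner integral
`∫_{‖x‖ ≥ 2‖y‖} ‖x‖^(-b-n) = κ ‖y‖^(-b)` cancels the weight `‖y‖^b`, so `‖U f‖_q ≤ κ ‖f‖_q`.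
-/

open MeasureTheory Real Set Metric
open scoped ENNReal NNReal

section

variable {α β : Type*} [MeasurableSpace α] [MeasurableSpace β]

theorem lintegral_mul_rpow_le_of_holderConjugate {μ : Measure α} {p q : ℝ}
    (hpq : p.HolderConjugate q) {f w : α → ℝ≥0∞} (hf : AEMeasurable f μ)
    (hw : AEMeasurable w μ) (hw0 : ∀ᵐ x ∂μ, w x ≠ 0) (hwtop : ∀ᵐ x ∂μ, w x ≠ ⊤) {a b c : ℝ}
    (habc : a / p + b / q = c) :
    (∫⁻ x, f x * w x ^ c ∂μ) ^ q ≤ (∫⁻ x, w x ^ a ∂μ) ^ (q - 1) * ∫⁻ x, f x ^ q * w x ^ b ∂μ := by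
  have hsplit : ∫⁻ x, f x * w x ^ c ∂μ = ∫⁻ x, w x ^ (a / p) * (f x * w x ^ (b / q)) ∂μ := by
    refine lintegral_congr_ae ?_
    filter_upwards [hw0, hwtop] with x hx0 hxtop
    rw [← habc, ENNReal.rpow_add _ _ hx0 hxtop]
    ring
  calc (∫⁻ x, f x * w x ^ c ∂μ) ^ q
      ≤ ((∫⁻ x, (w x ^ (a / p)) ^ p ∂μ) ^ (1 / p) *
          (∫⁻ x, (f x * w x ^ (b / q)) ^ q ∂μ) ^ (1 / q)) ^ q := by
        rw [hsplit]
        exact ENNReal.rpow_le_rpow (ENNReal.lintegral_mul_le_Lp_mul_Lq μ hpq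
          (hw.pow_const _) (hf.mul (hw.pow_const _))) hpq.symm.nonneg
    _ = (∫⁻ x, w x ^ a ∂μ) ^ (q - 1) * ∫⁻ x, f x ^ q * w x ^ b ∂μ := by
        have hp : 1 / p * q = q - 1 := by rw [one_div_mul_eq_div, hpq.symm.div_conj_eq_sub_one]
        simp_rw [ENNReal.mul_rpow_of_nonneg _ _ hpq.symm.nonneg, ← ENNReal.rpow_mul,
          div_mul_cancel₀ _ hpq.ne_zero, div_mul_cancel₀ _ hpq.symm.ne_zero]
        rw [hp, ENNReal.rpow_one]

theorem lintegral_mul_setLIntegral_comm {μ : Measure α} {ν : Measure β} [SFinite μ] [SFinite ν]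
    {U : Set (α × β)} (hU : MeasurableSet U) {w : α → ℝ≥0∞} {F : β → ℝ≥0∞}
    (hw : AEMeasurable w μ) (hF : AEMeasurable F ν) :
    ∫⁻ x, w x * ∫⁻ y in {y | (x, y) ∈ U}, F y ∂ν ∂μ =
      ∫⁻ y, F y * ∫⁻ x in {x | (x, y) ∈ U}, w x ∂μ ∂ν := by
  have hG : AEMeasurable (Function.uncurry fun x y ↦ U.indicator (fun z ↦ w z.1 * F z.2) (x, y))
      (μ.prod ν) := (hw.comp_fst.mul hF.comp_snd).indicator hU
  have hUx (x : α) : MeasurableSet {y | (x, y) ∈ U} := measurable_prodMk_left hU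
  have hUy (y : β) : MeasurableSet {x | (x, y) ∈ U} := measurable_prodMk_right hU
  calc ∫⁻ x, w x * ∫⁻ y in {y | (x, y) ∈ U}, F y ∂ν ∂μ
      = ∫⁻ x, ∫⁻ y, U.indicator (fun z ↦ w z.1 * F z.2) (x, y) ∂ν ∂μ := by
        refine lintegral_congr fun x ↦ ?_
        rw [← lintegral_indicator (hUx x),
          ← lintegral_const_mul'' _ (hF.indicator (hUx x))]
        congr with y
        by_cases h : (x, y) ∈ U <;> simp [h]
    _ = ∫⁻ y, ∫⁻ x, U.indicator (fun z ↦ w z.1 * F z.2) (x, y) ∂μ ∂ν :=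
        lintegral_lintegral_swap hG
    _ = ∫⁻ y, F y * ∫⁻ x in {x | (x, y) ∈ U}, w x ∂μ ∂ν := by
        refine lintegral_congr fun y ↦ ?_
        rw [← lintegral_indicator (hUy y),
          ← lintegral_const_mul'' _ (hw.indicator (hUy y))]
        congr with x
        by_cases h : (x, y) ∈ U <;> simp [h, mul_comm]

end

theorem setLIntegral_Ioc_zero_ofReal_rpow {c : ℝ} (hc : -1 < c) {R : ℝ} (hR : 0 ≤ R) :
    ∫⁻ r in Ioc 0 R, ENNReal.ofReal (r ^ c) = ENNReal.ofReal (R ^ (c + 1) / (c + 1)) := by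
  rw [← ofReal_integral_eq_lintegral_ofReal, ← intervalIntegral.integral_of_le hR,
    integral_rpow (Or.inl hc), zero_rpow (by linarith), sub_zero]
  · exact (intervalIntegral.intervalIntegrable_rpow' hc).1
  · filter_upwards [ae_restrict_mem measurableSet_Ioc] with r hr
    exact rpow_nonneg hr.1.le c

theorem setLIntegral_Ioi_ofReal_rpow {c : ℝ} (hc : c < -1) {R : ℝ} (hR : 0 < R) :
    ∫⁻ r in Ioi R, ENNReal.ofReal (r ^ c) = ENNReal.ofReal (-R ^ (c + 1) / (c + 1)) := by
  rw [← ofReal_integral_eq_lintegral_ofReal (integrableOn_Ioi_rpow_of_lt hc hR),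
    integral_Ioi_rpow_of_lt hc hR]
  filter_upwards [ae_restrict_mem measurableSet_Ioi] with r hr
  exact rpow_nonneg (hR.trans hr).le c

section

variable {E : Type*} [NormedAddCommGroup E] [NormedSpace ℝ E] [MeasurableSpace E]
  [FiniteDimensional ℝ E] (μ : Measure E) [μ.IsAddHaarMeasure]

local notation "dim" => Module.finrank ℝ

/-- The operator `U` of the statement, acting on `f = |g|`. -/
noncomputable def steinWeissOp (s : ℝ) (f : E → ℝ≥0∞) (x : E) : ℝ≥0∞ :=
  ‖x‖ₑ ^ (s - dim E) * ∫⁻ y in {y | ‖y‖ ≤ ‖x‖ / 2}, f y * ‖y‖ₑ ^ (-s) ∂μ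

noncomputable def steinWeissConst (b : ℝ) : ℝ≥0∞ :=
  dim E * μ (ball 0 1) * ENNReal.ofReal (2 ^ (-b) / b)

theorem steinWeissConst_ne_top (b : ℝ) : steinWeissConst μ b ≠ ⊤ := by
  unfold steinWeissConst
  finiteness

variable [BorelSpace E] [Nontrivial E]

theorem lintegral_fun_norm_addHaar {f : ℝ → ℝ≥0∞} (hf : Measurable f) :
    ∫⁻ x, f ‖x‖ ∂μ = dim E * μ (ball 0 1) *
      ∫⁻ r in Ioi (0 : ℝ), ENNReal.ofReal (r ^ (dim E - 1)) * f r := by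
  calc ∫⁻ x, f ‖x‖ ∂μ = ∫⁻ x : ({(0 : E)}ᶜ : Set E), f ‖x.1‖ ∂(μ.comap (↑)) := by
        rw [lintegral_subtype_comap (measurableSet_singleton _).compl (fun x ↦ f ‖x‖),
          restrict_compl_singleton]
    _ = ∫⁻ p, f p.2 ∂(μ.toSphere.prod (.volumeIoiPow (dim E - 1))) := by
        simpa using μ.measurePreserving_homeomorphUnitSphereProd.lintegral_comp_emb
          (Homeomorph.measurableEmbedding _) (fun p ↦ f p.2)
    _ = μ.toSphere univ * ∫⁻ r, f r ∂(.volumeIoiPow (dim E - 1)) := by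
        rw [lintegral_prod (fun p : _ × Ioi (0 : ℝ) ↦ f p.2)
          (hf.comp (measurable_subtype_coe.comp measurable_snd)).aemeasurable]
        simp only [lintegral_const, mul_comm]
    _ = _ := by
        rw [μ.toSphere_apply_univ, Measure.volumeIoiPow,
          lintegral_withDensity_eq_lintegral_mul _ (by fun_prop) (by fun_prop)]
        exact congrArg _ (lintegral_subtype_comap measurableSet_Ioi
          (fun r ↦ ENNReal.ofReal (r ^ (dim E - 1)) * f r))

theorem setLIntegral_norm_preimage_enorm_rpow (c : ℝ) {I : Set ℝ} (hI : MeasurableSet I) :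
    ∫⁻ x in (‖·‖) ⁻¹' I, ‖x‖ₑ ^ c ∂μ =
      dim E * μ (ball 0 1) * ∫⁻ r in I ∩ Ioi 0, ENNReal.ofReal (r ^ (dim E + c - 1)) := by
  have hpolar := lintegral_fun_norm_addHaar μ (f := I.indicator (ENNReal.ofReal · ^ c))
    ((ENNReal.measurable_ofReal.pow_const c).indicator hI)
  have hind : ∀ x : E, ((‖·‖) ⁻¹' I).indicator (‖·‖ₑ ^ c) x =
      I.indicator (ENNReal.ofReal · ^ c) ‖x‖ := fun x ↦ by
    by_cases hx : ‖x‖ ∈ I <;> simp [hx, ofReal_norm]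
  rw [← lintegral_indicator (measurable_norm hI), lintegral_congr hind, hpolar,
    ← Measure.restrict_restrict hI, ← lintegral_indicator hI]
  congr 1
  refine setLIntegral_congr_fun measurableSet_Ioi fun r (hr : 0 < r) ↦ ?_
  by_cases hrI : r ∈ I
  · rw [indicator_of_mem hrI, indicator_of_mem hrI, ENNReal.ofReal_rpow_of_pos hr,
      ← ENNReal.ofReal_mul (by positivity), ← rpow_natCast, ← rpow_add hr,
      Nat.cast_pred Module.finrank_pos]
    ring_nf
  · simp [hrI]

theorem setLIntegral_norm_le_enorm_rpow {b : ℝ} (hb : 0 < b) {R : ℝ} (hR : 0 ≤ R) :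
    ∫⁻ x in {x | ‖x‖ ≤ R}, ‖x‖ₑ ^ (b - dim E) ∂μ =
      dim E * μ (ball 0 1) * ENNReal.ofReal (R ^ b / b) := by
  rw [show {x : E | ‖x‖ ≤ R} = (‖·‖) ⁻¹' Iic R from rfl,
    setLIntegral_norm_preimage_enorm_rpow μ _ measurableSet_Iic, Iic_inter_Ioi,
    add_sub_cancel, setLIntegral_Ioc_zero_ofReal_rpow (by linarith) hR, sub_add_cancel]

theorem setLIntegral_le_norm_enorm_rpow {b : ℝ} (hb : 0 < b) {R : ℝ} (hR : 0 < R) :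
    ∫⁻ x in {x | R ≤ ‖x‖}, ‖x‖ₑ ^ (-b - dim E) ∂μ =
      dim E * μ (ball 0 1) * ENNReal.ofReal (R ^ (-b) / b) := by
  rw [show {x : E | R ≤ ‖x‖} = (‖·‖) ⁻¹' Ici R from rfl,
    setLIntegral_norm_preimage_enorm_rpow μ _ measurableSet_Ici,
    inter_eq_left.2 (Ici_subset_Ioi.2 hR), Measure.restrict_congr_set Ioi_ae_eq_Ici.symm,
    setLIntegral_Ioi_ofReal_rpow (by linarith) hR]
  ring_nf

theorem setLIntegral_norm_le_half_enorm_rpow {b : ℝ} (hb : 0 < b) (x : E) :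
    ∫⁻ y in {y | ‖y‖ ≤ ‖x‖ / 2}, ‖y‖ₑ ^ (b - dim E) ∂μ = steinWeissConst μ b * ‖x‖ₑ ^ b := by
  have h : (‖x‖ / 2) ^ b / b = 2 ^ (-b) / b * ‖x‖ ^ b := by
    rw [div_rpow (norm_nonneg x) zero_le_two, rpow_neg zero_le_two]
    ring
  rw [steinWeissConst, setLIntegral_norm_le_enorm_rpow μ hb (by positivity), h,
    ENNReal.ofReal_mul (by positivity), ← ENNReal.ofReal_rpow_of_nonneg (norm_nonneg x) hb.le,
    ofReal_norm]
  ring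

theorem setLIntegral_half_norm_ge_enorm_rpow {b : ℝ} (hb : 0 < b) {y : E} (hy : y ≠ 0) :
    ∫⁻ x in {x | ‖y‖ ≤ ‖x‖ / 2}, ‖x‖ₑ ^ (-b - dim E) ∂μ = steinWeissConst μ b * ‖y‖ₑ ^ (-b) := by
  have hset : {x : E | ‖y‖ ≤ ‖x‖ / 2} = {x | 2 * ‖y‖ ≤ ‖x‖} := by
    ext x
    exact le_div_iff₀' (two_pos : (0 : ℝ) < 2)
  have h : (2 * ‖y‖) ^ (-b) / b = 2 ^ (-b) / b * ‖y‖ ^ (-b) := by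
    rw [mul_rpow zero_le_two (norm_nonneg y)]
    ring
  rw [steinWeissConst, hset, setLIntegral_le_norm_enorm_rpow μ hb (by positivity), h,
    ENNReal.ofReal_mul (by positivity), ← ENNReal.ofReal_rpow_of_pos (norm_pos_iff.2 hy),
    ofReal_norm]
  ring

theorem steinWeissOp_rpow_le {q s b : ℝ} (hq : 1 < q) (hb : 0 < b)
    (hsb : s = dim E - dim E / q - b) {f : E → ℝ≥0∞} (hf : AEMeasurable f μ) {x : E}
    (hx : x ≠ 0) :
    steinWeissOp μ s f x ^ q ≤ steinWeissConst μ b ^ (q - 1) *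
      (‖x‖ₑ ^ (-b - dim E) * ∫⁻ y in {y | ‖y‖ ≤ ‖x‖ / 2}, f y ^ q * ‖y‖ₑ ^ b ∂μ) := by
  set κ := steinWeissConst μ b
  have hpq : (conjExponent q).HolderConjugate q := (HolderConjugate.conjExponent hq).symm
  have hexp : (b - dim E) / conjExponent q + b / q = -s := by
    rw [hsb, conjExponent]
    field_simp
    ring
  have hHolder := lintegral_mul_rpow_le_of_holderConjugate
    (μ := μ.restrict {y | ‖y‖ ≤ ‖x‖ / 2}) hpq hf.restrict
    measurable_enorm.aemeasurable (ae_restrict_of_ae ((μ.ae_ne 0).mono fun y ↦ enorm_ne_zero.2))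
    (ae_of_all _ fun y ↦ enorm_ne_top) hexp
  rw [setLIntegral_norm_le_half_enorm_rpow μ hb] at hHolder
  have hx0 : ‖x‖ₑ ≠ 0 := enorm_ne_zero.2 hx
  calc steinWeissOp μ s f x ^ q
      ≤ ‖x‖ₑ ^ ((s - dim E) * q) *
          ((κ * ‖x‖ₑ ^ b) ^ (q - 1) * ∫⁻ y in {y | ‖y‖ ≤ ‖x‖ / 2}, f y ^ q * ‖y‖ₑ ^ b ∂μ) := by
        rw [steinWeissOp, ENNReal.mul_rpow_of_nonneg _ _ (by linarith), ← ENNReal.rpow_mul]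
        gcongr
    _ = κ ^ (q - 1) * (‖x‖ₑ ^ ((s - dim E) * q + b * (q - 1)) *
          ∫⁻ y in {y | ‖y‖ ≤ ‖x‖ / 2}, f y ^ q * ‖y‖ₑ ^ b ∂μ) := by
        rw [ENNReal.mul_rpow_of_nonneg _ _ (by linarith), ← ENNReal.rpow_mul,
          ENNReal.rpow_add _ _ hx0 enorm_ne_top]
        ring
    _ = _ := by
        congr 3
        rw [hsb]
        field_simp
        ring

theorem lintegral_steinWeissOp_rpow_le {q s b : ℝ} (hq : 1 < q) (hb : 0 < b)
    (hsb : s = dim E - dim E / q - b) {f : E → ℝ≥0∞} (hf : AEMeasurable f μ) :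
    ∫⁻ x, steinWeissOp μ s f x ^ q ∂μ ≤ steinWeissConst μ b ^ q * ∫⁻ x, f x ^ q ∂μ := by
  set κ := steinWeissConst μ b
  have hκ : κ ≠ ⊤ := steinWeissConst_ne_top μ b
  have hU : MeasurableSet {z : E × E | ‖z.2‖ ≤ ‖z.1‖ / 2} :=
    measurableSet_le (by fun_prop) (by fun_prop)
  calc ∫⁻ x, steinWeissOp μ s f x ^ q ∂μ
      ≤ ∫⁻ x, κ ^ (q - 1) *
          (‖x‖ₑ ^ (-b - dim E) * ∫⁻ y in {y | ‖y‖ ≤ ‖x‖ / 2}, f y ^ q * ‖y‖ₑ ^ b ∂μ) ∂μ :=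
        lintegral_mono_ae ((μ.ae_ne 0).mono fun x hx ↦ steinWeissOp_rpow_le μ hq hb hsb hf hx)
    _ = κ ^ (q - 1) * ∫⁻ y, f y ^ q * ‖y‖ₑ ^ b *
          ∫⁻ x in {x | ‖y‖ ≤ ‖x‖ / 2}, ‖x‖ₑ ^ (-b - dim E) ∂μ ∂μ := by
        rw [lintegral_const_mul' _ _ (ENNReal.rpow_ne_top_of_nonneg (by linarith) hκ)]
        congr 1
        exact lintegral_mul_setLIntegral_comm hU (by fun_prop) (by fun_prop)
    _ = κ ^ (q - 1) * ∫⁻ y, κ * f y ^ q ∂μ := by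
        congr 1
        refine lintegral_congr_ae ((μ.ae_ne 0).mono fun y hy ↦ ?_)
        dsimp only
        rw [setLIntegral_half_norm_ge_enorm_rpow μ hb hy, mul_comm κ, ← mul_assoc,
          mul_assoc _ (_ ^ b), ← ENNReal.rpow_add _ _ (enorm_ne_zero.2 hy) enorm_ne_top,
          add_neg_cancel, ENNReal.rpow_zero, mul_one, mul_comm]
    _ = κ ^ q * ∫⁻ x, f x ^ q ∂μ := by
        rw [lintegral_const_mul' _ _ hκ, ← mul_assoc]
        nth_rw 2 [← ENNReal.rpow_one κ]
        rw [← ENNReal.rpow_add_of_nonneg _ _ (by linarith) zero_le_one, sub_add_cancel]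

end

/-- Stein–Weiss kernel lemma: for `1 < q < ∞` and `0 < s < d - d/q`, the operator
`Ug(x) = |x|^{s-d} ∫_{|y| ≤ |x|/2} |g(y)| |y|^{-s} dy` is bounded on `L^q(ℝ^d)`. -/
theorem stein_weiss_kernel_lemma (d : ℕ) (q s : ℝ) (hq : 1 < q) (hs : 0 < s)
    (hsd : s < (d : ℝ) - (d : ℝ) / q) :
    ∃ C : ℝ, 0 < C ∧ ∀ g : EuclideanSpace ℝ (Fin d) → ℝ,
      MeasureTheory.MemLp g (ENNReal.ofReal q) volume →
      ∫⁻ x : EuclideanSpace ℝ (Fin d),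
          ((‖x‖₊ : ℝ≥0∞) ^ (s - (d : ℝ)) *
            ∫⁻ y in {y : EuclideanSpace ℝ (Fin d) | ‖y‖ ≤ ‖x‖ / 2},
              (‖g y‖₊ : ℝ≥0∞) * (‖y‖₊ : ℝ≥0∞) ^ (-s)) ^ q ≤
        ENNReal.ofReal C * ∫⁻ x : EuclideanSpace ℝ (Fin d), (‖g x‖₊ : ℝ≥0∞) ^ q := by
  have hd : d ≠ 0 := by
    rintro rfl
    simp only [Nat.cast_zero, zero_div, sub_zero] at hsd
    linarith
  have : NeZero d := ⟨hd⟩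
  set κ := steinWeissConst (volume : Measure (EuclideanSpace ℝ (Fin d))) (d - d / q - s) ^ q
  have hκ : κ ≠ ⊤ := ENNReal.rpow_ne_top_of_nonneg (by linarith) (steinWeissConst_ne_top _ _)
  refine ⟨κ.toReal + 1, by positivity, fun g hg ↦ ?_⟩
  have key := lintegral_steinWeissOp_rpow_le volume hq (s := s) (b := d - d / q - s) (by linarith)
    (by rw [finrank_euclideanSpace_fin]; ring) hg.1.aemeasurable.enorm
  simp only [steinWeissOp, finrank_euclideanSpace_fin, enorm_eq_nnnorm] at key
  refine key.trans ?_
  gcongr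
  exact ENNReal.le_ofReal_iff_toReal_le hκ (by positivity) |>.2 (by linarith)
end

section
/- Let 1 < q < ∞ and 0 < s < d − d/q. Define, for a measurable function g on ℝ^d, S₂g(x) = ∫_{{|y| ≤ |x|/2}} |g(y)| / ( |y|^{s} |x−y|^{d−s} ) dy. Then there is a constant C = C(d,s,q) such that ∫_{ℝ^d} |S₂g(x)|^q dx ≤ C ∫_{ℝ^d} |g(x)|^q dx for every g ∈ L^q(ℝ^d). -/
open MeasureTheory Real
open scoped ENNReal NNReal
open Set Metric Module

/-!
On `‖y‖ ≤ ‖x‖ / 2` we have `‖x - y‖ ≥ ‖x‖ / 2`, so `S₂g(x)` is at most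
`2 ^ (d - s) ‖x‖ ^ (s - d) ∫_{‖y‖ ≤ ‖x‖/2} |g y| ‖y‖ ^ (-s) dy`, a Hardy-type operator.
Hölder's inequality with the weight `‖y‖ ^ (-β)`, where `s q / (q - 1) < β < d`, bounds the
`q`-th power of the latter by a multiple of `‖x‖ ^ (-d - ε) ∫_{‖y‖ ≤ ‖x‖/2} ‖y‖ ^ ε |g y| ^ q dy`
with `ε = β (q - 1) - s q > 0`. Integrating in `x` and exchanging the integrals produces
`∫_{‖x‖ ≥ 2‖y‖} ‖x‖ ^ (-d - ε) dx ≤ c ‖y‖ ^ (-ε)`, which cancels the weight. Both radial power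
integrals are finite, and scale like powers of the radius since Lebesgue measure is
dilation-homogeneous.
-/

section
variable {α : Type*} [MeasurableSpace α] {μ : Measure α}

theorem lintegral_mul_rpow_le {p q : ℝ} (hpq : p.HolderConjugate q) {u v : α → ℝ≥0∞}
    (hu : AEMeasurable u μ) (hv : AEMeasurable v μ) :
    (∫⁻ a, u a * v a ∂μ) ^ p ≤ (∫⁻ a, u a ^ q ∂μ) ^ (p - 1) * ∫⁻ a, v a ^ p ∂μ := by
  calc (∫⁻ a, u a * v a ∂μ) ^ p
      ≤ ((∫⁻ a, u a ^ q ∂μ) ^ (1 / q) * (∫⁻ a, v a ^ p ∂μ) ^ (1 / p)) ^ p :=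
        ENNReal.rpow_le_rpow (ENNReal.lintegral_mul_le_Lp_mul_Lq μ hpq.symm hu hv) hpq.nonneg
    _ = (∫⁻ a, u a ^ q ∂μ) ^ (p - 1) * ∫⁻ a, v a ^ p ∂μ := by
        rw [ENNReal.mul_rpow_of_nonneg _ _ hpq.nonneg, ← ENNReal.rpow_mul, ← ENNReal.rpow_mul,
          one_div_mul_eq_div, one_div_mul_eq_div, hpq.div_conj_eq_sub_one, div_self hpq.ne_zero,
          ENNReal.rpow_one]

theorem lintegral_rpow_le_weighted {p q : ℝ} (hpq : p.HolderConjugate q) {f w : α → ℝ≥0∞}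
    (hf : AEMeasurable f μ) (hw : AEMeasurable w μ) (hw0 : ∀ᵐ a ∂μ, w a ≠ 0)
    (hwt : ∀ᵐ a ∂μ, w a ≠ ∞) (β : ℝ) :
    (∫⁻ a, f a ∂μ) ^ p ≤
      (∫⁻ a, w a ^ (-β) ∂μ) ^ (p - 1) * ∫⁻ a, w a ^ (β * (p - 1)) * f a ^ p ∂μ := by
  have hsplit : ∫⁻ a, f a ∂μ = ∫⁻ a, w a ^ (-β / q) * (w a ^ (β / q) * f a) ∂μ := by
    refine lintegral_congr_ae ?_
    filter_upwards [hw0, hwt] with a h0 ht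
    rw [← mul_assoc, ← ENNReal.rpow_add _ _ h0 ht, neg_div, neg_add_cancel, ENNReal.rpow_zero,
      one_mul]
  rw [hsplit]
  refine (lintegral_mul_rpow_le hpq (hw.pow_const _) ((hw.pow_const _).mul hf)).trans_eq ?_
  congr 2
  · exact lintegral_congr fun a => by rw [← ENNReal.rpow_mul, div_mul_cancel₀ _ hpq.symm.ne_zero]
  · funext a
    rw [Pi.mul_apply, ENNReal.mul_rpow_of_nonneg _ _ hpq.nonneg, ← ENNReal.rpow_mul,
      div_mul_eq_mul_div, mul_div_assoc, hpq.div_conj_eq_sub_one]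

theorem lintegral_mul_setLIntegral_comm_s13 {β : Type*} [MeasurableSpace β] {ν : Measure β}
    [SFinite μ] [SFinite ν] {T : Set (α × β)} (hT : MeasurableSet T) {f : α → ℝ≥0∞}
    {g : β → ℝ≥0∞} (hf : Measurable f) (hg : Measurable g) :
    ∫⁻ x, f x * ∫⁻ y in {y | (x, y) ∈ T}, g y ∂ν ∂μ =
      ∫⁻ y, g y * ∫⁻ x in {x | (x, y) ∈ T}, f x ∂μ ∂ν := by
  have hF : Measurable (T.indicator fun p : α × β => f p.1 * g p.2) :=
    ((hf.comp measurable_fst).mul (hg.comp measurable_snd)).indicator hT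
  calc ∫⁻ x, f x * ∫⁻ y in {y | (x, y) ∈ T}, g y ∂ν ∂μ
      = ∫⁻ x, ∫⁻ y, T.indicator (fun p => f p.1 * g p.2) (x, y) ∂ν ∂μ := by
        refine lintegral_congr fun x => ?_
        have hTx : MeasurableSet {y | (x, y) ∈ T} := measurable_prodMk_left hT
        rw [← lintegral_indicator hTx, ← lintegral_const_mul _ (hg.indicator hTx)]
        congr 1 with y
        by_cases h : (x, y) ∈ T <;> simp [h]
    _ = ∫⁻ y, ∫⁻ x, T.indicator (fun p => f p.1 * g p.2) (x, y) ∂μ ∂ν :=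
        lintegral_lintegral_swap hF.aemeasurable
    _ = ∫⁻ y, g y * ∫⁻ x in {x | (x, y) ∈ T}, f x ∂μ ∂ν := by
        refine lintegral_congr fun y => ?_
        have hTy : MeasurableSet {x | (x, y) ∈ T} := measurable_prodMk_right hT
        rw [← lintegral_indicator hTy, ← lintegral_const_mul _ (hf.indicator hTy)]
        congr 1 with x
        by_cases h : (x, y) ∈ T <;> simp [h, mul_comm]

end

theorem div_enorm_rpow_mul_enorm_sub_rpow_le {G : Type*} [SeminormedAddCommGroup G] {s a : ℝ}
    (hs : 0 ≤ s) (ha : 0 ≤ a) {x y : G} (hy : ‖y‖ ≤ ‖x‖ / 2) (c : ℝ≥0∞) :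
    c / (‖y‖ₑ ^ s * ‖x - y‖ₑ ^ a) ≤ 2 ^ a * ‖x‖ₑ ^ (-a) * (c * ‖y‖ₑ ^ (-s)) := by
  have hxy : ‖x‖ₑ ≤ 2 * ‖x - y‖ₑ := by
    rw [← ofReal_norm, ← ofReal_norm, ← ENNReal.ofReal_ofNat 2, ← ENNReal.ofReal_mul zero_le_two]
    exact ENNReal.ofReal_le_ofReal (by linarith [norm_sub_norm_le x y])
  have hinv : (‖x - y‖ₑ ^ a)⁻¹ ≤ 2 ^ a * ‖x‖ₑ ^ (-a) :=
    calc (‖x - y‖ₑ ^ a)⁻¹ = 2 ^ a * (2 * ‖x - y‖ₑ) ^ (-a) := by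
          rw [ENNReal.mul_rpow_of_ne_top ENNReal.ofNat_ne_top enorm_ne_top, ← mul_assoc,
            ← ENNReal.rpow_add _ _ two_ne_zero ENNReal.ofNat_ne_top, add_neg_cancel,
            ENNReal.rpow_zero, one_mul, ENNReal.rpow_neg]
      _ ≤ 2 ^ a * ‖x‖ₑ ^ (-a) :=
          mul_le_mul_right (by
            rw [ENNReal.rpow_neg, ENNReal.rpow_neg]
            exact ENNReal.inv_le_inv.2 (ENNReal.rpow_le_rpow hxy ha)) _
  rw [div_eq_mul_inv, ENNReal.mul_inv (.inr (ENNReal.rpow_ne_top_of_nonneg ha enorm_ne_top))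
    (.inl (ENNReal.rpow_ne_top_of_nonneg hs enorm_ne_top)), ← ENNReal.rpow_neg, ← mul_assoc,
    mul_comm (2 ^ a * _)]
  exact mul_le_mul_right hinv _

section

variable {E : Type*} [NormedAddCommGroup E] [NormedSpace ℝ E] [FiniteDimensional ℝ E]
  [MeasurableSpace E] [BorelSpace E] (μ : Measure E) [μ.IsAddHaarMeasure]

theorem setLIntegral_norm_div_mem_enorm_rpow (I : Set ℝ) (t : ℝ) {R : ℝ} (hR : 0 < R) :
    ∫⁻ x in {x : E | ‖x‖ / R ∈ I}, ‖x‖ₑ ^ t ∂μ =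
      ENNReal.ofReal R ^ (finrank ℝ E + t) * ∫⁻ x in {x : E | ‖x‖ ∈ I}, ‖x‖ₑ ^ t ∂μ := by
  let e : E ≃ᵐ E := (Homeomorph.smul (Units.mk0 R⁻¹ (inv_ne_zero hR.ne'))).toMeasurableEquiv
  have he : ∀ x, e x = R⁻¹ • x := fun _ => rfl
  have hmap : Measure.map e μ = ENNReal.ofReal (R ^ finrank ℝ E) • μ := by
    have := Measure.map_addHaar_smul μ (inv_ne_zero hR.ne')
    rwa [inv_pow, inv_inv, abs_of_pos (by positivity)] at this
  have hpre : e ⁻¹' {x | ‖x‖ ∈ I} = {x | ‖x‖ / R ∈ I} := by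
    ext x
    simp [he, norm_smul, abs_of_pos hR, div_eq_inv_mul]
  have hRt : ENNReal.ofReal R ^ (finrank ℝ E + t) =
      ENNReal.ofReal (R ^ finrank ℝ E) * ‖R‖ₑ ^ t := by
    rw [ENNReal.rpow_add _ _ (by simpa using hR) ENNReal.ofReal_ne_top, ← ofReal_norm,
      Real.norm_of_nonneg hR.le, ENNReal.rpow_natCast, ENNReal.ofReal_pow hR.le]
  calc ∫⁻ x in {x : E | ‖x‖ / R ∈ I}, ‖x‖ₑ ^ t ∂μ
      = ∫⁻ x in e ⁻¹' {x | ‖x‖ ∈ I}, ‖R • e x‖ₑ ^ t ∂μ := by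
        simp only [hpre, he, smul_inv_smul₀ hR.ne']
    _ = ∫⁻ y in {x | ‖x‖ ∈ I}, ‖R • y‖ₑ ^ t ∂(Measure.map e μ) := by
        rw [e.measurableEmbedding.restrict_map, e.measurableEmbedding.lintegral_map]
    _ = ENNReal.ofReal R ^ (finrank ℝ E + t) * ∫⁻ x in {x : E | ‖x‖ ∈ I}, ‖x‖ₑ ^ t ∂μ := by
        simp only [hmap, Measure.restrict_smul, lintegral_smul_measure, enorm_smul,
          ENNReal.mul_rpow_of_ne_top enorm_ne_top enorm_ne_top]
        rw [lintegral_const_mul' _ _ (ENNReal.rpow_ne_top_of_ne_zero (by simpa using hR.ne')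
          enorm_ne_top), hRt, smul_eq_mul, mul_assoc]

theorem setLIntegral_norm_le_one_enorm_rpow_lt_top [Nontrivial E] {t : ℝ}
    (ht : -(finrank ℝ E : ℝ) < t) :
    ∫⁻ x in {x : E | ‖x‖ ∈ Iic 1}, ‖x‖ₑ ^ t ∂μ < ∞ := by
  have hint : IntegrableOn (fun x : E => ‖x‖ ^ t) (ball 0 2) μ :=
    integrableOn_ball_of_norm_le_rpow (C := 1) (α := -t) Module.finrank_pos (by linarith)
      (.of_forall fun x => by simp [Real.norm_of_nonneg (rpow_nonneg (norm_nonneg x) t)])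
      (measurable_norm.pow_const t).aestronglyMeasurable
  have h0 : ∀ᵐ x ∂μ, x ≠ 0 := by simp [ae_iff]
  calc ∫⁻ x in {x : E | ‖x‖ ∈ Iic 1}, ‖x‖ₑ ^ t ∂μ
      ≤ ∫⁻ x in ball 0 2, ‖‖x‖ ^ t‖ₑ ∂μ := by
        refine (lintegral_mono_set fun x (hx : ‖x‖ ≤ 1) => mem_ball_zero_iff.2 (by linarith)).trans
          (lintegral_mono_ae ?_)
        filter_upwards [ae_restrict_of_ae h0] with x hx
        rw [Real.enorm_of_nonneg (by positivity), ← ENNReal.ofReal_rpow_of_pos (norm_pos_iff.2 hx),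
          ofReal_norm]
    _ < ∞ := hint.2

theorem setLIntegral_one_le_norm_enorm_rpow_lt_top {t : ℝ} (ht : t < -(finrank ℝ E : ℝ)) :
    ∫⁻ x in {x : E | ‖x‖ ∈ Ici 1}, ‖x‖ₑ ^ t ∂μ < ∞ := by
  have hbound : ∀ x : E, 1 ≤ ‖x‖ →
      ‖x‖ₑ ^ t ≤ ENNReal.ofReal (2 ^ (-t)) * ENNReal.ofReal ((1 + ‖x‖) ^ t) := by
    intro x hx
    rw [← ofReal_norm, ENNReal.ofReal_rpow_of_pos (by linarith),
      ← ENNReal.ofReal_mul (by positivity)]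
    refine ENNReal.ofReal_le_ofReal ?_
    calc ‖x‖ ^ t = 2 ^ (-t) * (2 * ‖x‖) ^ t := by
          rw [Real.mul_rpow zero_le_two (norm_nonneg x), ← mul_assoc, ← Real.rpow_add two_pos,
            neg_add_cancel, Real.rpow_zero, one_mul]
      _ ≤ 2 ^ (-t) * (1 + ‖x‖) ^ t := by
          refine mul_le_mul_of_nonneg_left ?_ (by positivity)
          exact Real.rpow_le_rpow_of_nonpos (x := 1 + ‖x‖) (y := 2 * ‖x‖) (by positivity)
            (by linarith) (by linarith [(finrank ℝ E).cast_nonneg (α := ℝ)])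
  calc ∫⁻ x in {x : E | ‖x‖ ∈ Ici 1}, ‖x‖ₑ ^ t ∂μ
      ≤ ∫⁻ x in {x : E | ‖x‖ ∈ Ici 1},
          ENNReal.ofReal (2 ^ (-t)) * ENNReal.ofReal ((1 + ‖x‖) ^ t) ∂μ :=
        setLIntegral_mono' (measurableSet_Ici.preimage measurable_norm) hbound
    _ ≤ ENNReal.ofReal (2 ^ (-t)) * ∫⁻ x, ENNReal.ofReal ((1 + ‖x‖) ^ t) ∂μ := by
        rw [← lintegral_const_mul' _ _ ENNReal.ofReal_ne_top]
        exact setLIntegral_le_lintegral _ _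
    _ < ∞ := ENNReal.mul_lt_top ENNReal.ofReal_lt_top
        (by simpa using finite_integral_one_add_norm (μ := μ) (r := -t) (by linarith))

theorem rpow_setLIntegral_norm_le_half_le [Nontrivial E] {q : ℝ} (hq : 1 < q) (s β : ℝ)
    {F : E → ℝ≥0∞} (hF : Measurable F) {x : E} (hx : x ≠ 0) :
    (∫⁻ y in {y : E | ‖y‖ ≤ ‖x‖ / 2}, F y * ‖y‖ₑ ^ (-s) ∂μ) ^ q ≤
      (‖x‖ₑ ^ (finrank ℝ E - β) * ∫⁻ y in {y : E | ‖y‖ ∈ Iic 1}, ‖y‖ₑ ^ (-β) ∂μ) ^ (q - 1) *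
        ∫⁻ y in {y : E | ‖y‖ ≤ ‖x‖ / 2}, ‖y‖ₑ ^ (β * (q - 1)) * (F y * ‖y‖ₑ ^ (-s)) ^ q ∂μ := by
  have hx' : 0 < ‖x‖ := norm_pos_iff.2 hx
  have h0 : ∀ᵐ y ∂μ, ‖y‖ₑ ≠ 0 := by simp [ae_iff]
  refine (lintegral_rpow_le_weighted (Real.HolderConjugate.conjExponent hq)
    (by fun_prop) measurable_enorm.aemeasurable (ae_restrict_of_ae h0)
    (.of_forall fun _ => enorm_ne_top) β).trans
    (mul_le_mul_left (ENNReal.rpow_le_rpow ?_ (by linarith)) _)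
  calc ∫⁻ y in {y : E | ‖y‖ ≤ ‖x‖ / 2}, ‖y‖ₑ ^ (-β) ∂μ
      ≤ ∫⁻ y in {y : E | ‖y‖ / ‖x‖ ∈ Iic 1}, ‖y‖ₑ ^ (-β) ∂μ :=
        lintegral_mono_set fun y (hy : ‖y‖ ≤ ‖x‖ / 2) => (div_le_one hx').2 (by linarith)
    _ = _ := by rw [setLIntegral_norm_div_mem_enorm_rpow μ _ _ hx', ofReal_norm, ← sub_eq_add_neg]

theorem lintegral_enorm_rpow_mul_setLIntegral_le [Nontrivial E] (t : ℝ) {Φ : E → ℝ≥0∞}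
    (hΦ : Measurable Φ) :
    ∫⁻ x, ‖x‖ₑ ^ t * ∫⁻ y in {y : E | ‖y‖ ≤ ‖x‖ / 2}, Φ y ∂μ ∂μ ≤
      (∫⁻ x in {x : E | ‖x‖ ∈ Ici 1}, ‖x‖ₑ ^ t ∂μ) * ∫⁻ y, ‖y‖ₑ ^ (finrank ℝ E + t) * Φ y ∂μ := by
  have hT : MeasurableSet {p : E × E | ‖p.2‖ ≤ ‖p.1‖ / 2} :=
    measurableSet_le (by fun_prop) (by fun_prop)
  have h0 : ∀ᵐ y ∂μ, y ≠ 0 := by simp [ae_iff]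
  calc ∫⁻ x, ‖x‖ₑ ^ t * ∫⁻ y in {y : E | ‖y‖ ≤ ‖x‖ / 2}, Φ y ∂μ ∂μ
      = ∫⁻ y, Φ y * ∫⁻ x in {x : E | ‖y‖ ≤ ‖x‖ / 2}, ‖x‖ₑ ^ t ∂μ ∂μ :=
        lintegral_mul_setLIntegral_comm_s13 hT (measurable_enorm.pow_const t) hΦ
    _ ≤ ∫⁻ y, Φ y * (‖y‖ₑ ^ (finrank ℝ E + t) * ∫⁻ x in {x : E | ‖x‖ ∈ Ici 1}, ‖x‖ₑ ^ t ∂μ) ∂μ := by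
        refine lintegral_mono_ae (h0.mono fun y hy => mul_le_mul_right ?_ _)
        have hy' : 0 < ‖y‖ := norm_pos_iff.2 hy
        calc ∫⁻ x in {x : E | ‖y‖ ≤ ‖x‖ / 2}, ‖x‖ₑ ^ t ∂μ
            ≤ ∫⁻ x in {x : E | ‖x‖ / ‖y‖ ∈ Ici 1}, ‖x‖ₑ ^ t ∂μ :=
              lintegral_mono_set fun x (hx : ‖y‖ ≤ ‖x‖ / 2) => (one_le_div hy').2 (by linarith)
          _ = _ := by rw [setLIntegral_norm_div_mem_enorm_rpow μ _ _ hy', ofReal_norm]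
    _ = (∫⁻ x in {x : E | ‖x‖ ∈ Ici 1}, ‖x‖ₑ ^ t ∂μ) * ∫⁻ y, ‖y‖ₑ ^ (finrank ℝ E + t) * Φ y ∂μ := by
        rw [← lintegral_const_mul _ (by fun_prop)]
        congr 1 with y
        ring

theorem exists_lintegral_hardy_rpow_le [Nontrivial E] {q s : ℝ} (hq : 1 < q)
    (hsd : s < finrank ℝ E - finrank ℝ E / q) :
    ∃ C : ℝ≥0∞, C ≠ ∞ ∧ ∀ F : E → ℝ≥0∞, Measurable F →
      ∫⁻ x, (‖x‖ₑ ^ (s - finrank ℝ E) *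
          ∫⁻ y in {y : E | ‖y‖ ≤ ‖x‖ / 2}, F y * ‖y‖ₑ ^ (-s) ∂μ) ^ q ∂μ ≤
        C * ∫⁻ y, F y ^ q ∂μ := by
  set d : ℝ := (finrank ℝ E : ℝ)
  have hq0 : 0 < q := by linarith
  have hq1 : 0 < q - 1 := by linarith
  have hmd : s * q / (q - 1) < d := by
    rw [div_lt_iff₀ hq1]
    have := mul_lt_mul_of_pos_right hsd hq0
    rw [sub_mul, div_mul_cancel₀ _ hq0.ne'] at this
    linarith
  -- `s q / (q - 1) < β` makes the tail exponent `t` less than `-d`, and `β < d` makes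
  -- `‖y‖ ^ (-β)` integrable near the origin.
  obtain ⟨β, hsβ, hβd⟩ := exists_between hmd
  have hβs : s * q < β * (q - 1) := (div_lt_iff₀ hq1).1 hsβ
  set t : ℝ := s * q - β * (q - 1) - d
  set c₁ := ∫⁻ y in {y : E | ‖y‖ ∈ Iic 1}, ‖y‖ₑ ^ (-β) ∂μ
  set c₂ := ∫⁻ x in {x : E | ‖x‖ ∈ Ici 1}, ‖x‖ₑ ^ t ∂μ
  have hc₁ : c₁ ^ (q - 1) ≠ ∞ := ENNReal.rpow_ne_top_of_nonneg hq1.le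
    (setLIntegral_norm_le_one_enorm_rpow_lt_top μ (by linarith)).ne
  have hc₂ : c₂ ≠ ∞ := (setLIntegral_one_le_norm_enorm_rpow_lt_top μ (by linarith)).ne
  refine ⟨c₁ ^ (q - 1) * c₂, ENNReal.mul_ne_top hc₁ hc₂, fun F hF => ?_⟩
  set Φ : E → ℝ≥0∞ := fun y => ‖y‖ₑ ^ (β * (q - 1)) * (F y * ‖y‖ₑ ^ (-s)) ^ q
  have h0 : ∀ᵐ x ∂μ, x ≠ 0 := by simp [ae_iff]
  have hpoint : ∀ x : E, x ≠ 0 →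
      (‖x‖ₑ ^ (s - d) * ∫⁻ y in {y : E | ‖y‖ ≤ ‖x‖ / 2}, F y * ‖y‖ₑ ^ (-s) ∂μ) ^ q ≤
        c₁ ^ (q - 1) * (‖x‖ₑ ^ t * ∫⁻ y in {y : E | ‖y‖ ≤ ‖x‖ / 2}, Φ y ∂μ) := by
    intro x hx
    rw [ENNReal.mul_rpow_of_nonneg _ _ hq0.le]
    refine (mul_le_mul_right (rpow_setLIntegral_norm_le_half_le μ hq s β hF hx) _).trans_eq ?_
    rw [ENNReal.mul_rpow_of_nonneg _ _ hq1.le, ← ENNReal.rpow_mul, ← ENNReal.rpow_mul,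
      show t = (s - d) * q + (d - β) * (q - 1) by ring,
      ENNReal.rpow_add _ _ (enorm_ne_zero.2 hx) enorm_ne_top]
    ring
  have hcancel : ∀ y : E, y ≠ 0 → ‖y‖ₑ ^ (d + t) * Φ y = F y ^ q := by
    intro y hy
    have hy0 : ‖y‖ₑ ≠ 0 := enorm_ne_zero.2 hy
    simp only [Φ]
    rw [ENNReal.mul_rpow_of_nonneg _ _ hq0.le, ← ENNReal.rpow_mul, mul_comm (F y ^ q),
      ← mul_assoc, ← mul_assoc, ← ENNReal.rpow_add _ _ hy0 enorm_ne_top,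
      ← ENNReal.rpow_add _ _ hy0 enorm_ne_top,
      show d + t + β * (q - 1) + -s * q = 0 by ring, ENNReal.rpow_zero, one_mul]
  calc ∫⁻ x, (‖x‖ₑ ^ (s - d) *
          ∫⁻ y in {y : E | ‖y‖ ≤ ‖x‖ / 2}, F y * ‖y‖ₑ ^ (-s) ∂μ) ^ q ∂μ
      ≤ ∫⁻ x, c₁ ^ (q - 1) * (‖x‖ₑ ^ t * ∫⁻ y in {y : E | ‖y‖ ≤ ‖x‖ / 2}, Φ y ∂μ) ∂μ :=
        lintegral_mono_ae (h0.mono hpoint)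
    _ = c₁ ^ (q - 1) * ∫⁻ x, ‖x‖ₑ ^ t * ∫⁻ y in {y : E | ‖y‖ ≤ ‖x‖ / 2}, Φ y ∂μ ∂μ :=
        lintegral_const_mul' _ _ hc₁
    _ ≤ c₁ ^ (q - 1) * (c₂ * ∫⁻ y, ‖y‖ₑ ^ (d + t) * Φ y ∂μ) :=
        mul_le_mul_right
          (lintegral_enorm_rpow_mul_setLIntegral_le μ t (by simp only [Φ]; fun_prop)) _
    _ = c₁ ^ (q - 1) * c₂ * ∫⁻ y, F y ^ q ∂μ := by
        rw [lintegral_congr_ae (h0.mono hcancel), mul_assoc]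

theorem exists_lintegral_S2_rpow_le [Nontrivial E] {q s : ℝ} (hq : 1 < q) (hs : 0 ≤ s)
    (hsd : s < finrank ℝ E - finrank ℝ E / q) :
    ∃ C : ℝ≥0∞, C ≠ ∞ ∧ ∀ F : E → ℝ≥0∞, AEMeasurable F μ →
      ∫⁻ x, (∫⁻ y in {y : E | ‖y‖ ≤ ‖x‖ / 2},
          F y / (‖y‖ₑ ^ s * ‖x - y‖ₑ ^ ((finrank ℝ E : ℝ) - s)) ∂μ) ^ q ∂μ ≤
        C * ∫⁻ y, F y ^ q ∂μ := by
  set d : ℝ := (finrank ℝ E : ℝ)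
  have hq0 : 0 < q := by linarith
  have hds : 0 ≤ d - s := by
    have : 0 ≤ d / q := by positivity
    linarith
  obtain ⟨C, hC, hardy⟩ := exists_lintegral_hardy_rpow_le μ hq hsd
  have h2 : (2 : ℝ≥0∞) ^ ((d - s) * q) ≠ ∞ :=
    ENNReal.rpow_ne_top_of_nonneg (by positivity) ENNReal.ofNat_ne_top
  refine ⟨2 ^ ((d - s) * q) * C, ENNReal.mul_ne_top h2 hC, fun F hF => ?_⟩
  set F' := hF.mk F
  have hFF' : ∀ᵐ y ∂μ, F y = F' y := hF.ae_eq_mk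
  have hS : ∀ x : E, ∫⁻ y in {y : E | ‖y‖ ≤ ‖x‖ / 2}, F y / (‖y‖ₑ ^ s * ‖x - y‖ₑ ^ (d - s)) ∂μ ≤
      2 ^ (d - s) * (‖x‖ₑ ^ (s - d) * ∫⁻ y in {y : E | ‖y‖ ≤ ‖x‖ / 2}, F' y * ‖y‖ₑ ^ (-s) ∂μ) := by
    intro x
    rw [← lintegral_const_mul _ (by fun_prop), ← lintegral_const_mul _ (by fun_prop)]
    refine lintegral_mono_ae ?_
    filter_upwards [ae_restrict_mem (measurableSet_le (by fun_prop) (by fun_prop)),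
      ae_restrict_of_ae hFF'] with y hy hy'
    rw [hy', ← mul_assoc, show s - d = -(d - s) by ring]
    exact div_enorm_rpow_mul_enorm_sub_rpow_le hs hds hy _
  calc ∫⁻ x, (∫⁻ y in {y : E | ‖y‖ ≤ ‖x‖ / 2},
          F y / (‖y‖ₑ ^ s * ‖x - y‖ₑ ^ (d - s)) ∂μ) ^ q ∂μ
      ≤ ∫⁻ x, (2 ^ (d - s) * (‖x‖ₑ ^ (s - d) *
          ∫⁻ y in {y : E | ‖y‖ ≤ ‖x‖ / 2}, F' y * ‖y‖ₑ ^ (-s) ∂μ)) ^ q ∂μ :=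
        lintegral_mono fun x => ENNReal.rpow_le_rpow (hS x) hq0.le
    _ = 2 ^ ((d - s) * q) * ∫⁻ x, (‖x‖ₑ ^ (s - d) *
          ∫⁻ y in {y : E | ‖y‖ ≤ ‖x‖ / 2}, F' y * ‖y‖ₑ ^ (-s) ∂μ) ^ q ∂μ := by
        simp_rw [ENNReal.mul_rpow_of_nonneg _ _ hq0.le, ← ENNReal.rpow_mul]
        exact lintegral_const_mul' _ _ h2
    _ ≤ 2 ^ ((d - s) * q) * (C * ∫⁻ y, F' y ^ q ∂μ) :=
        mul_le_mul_right (hardy F' hF.measurable_mk) _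
    _ = 2 ^ ((d - s) * q) * C * ∫⁻ y, F y ^ q ∂μ := by
        rw [lintegral_congr_ae (hFF'.mono fun y hy => by rw [← hy]), mul_assoc]

end

/-- For `1 < q < ∞` and `0 < s < d - d/q`, the operator
`S₂g(x) = ∫_{|y| ≤ |x|/2} |g(y)| / (|y|^s |x-y|^{d-s}) dy` is bounded on `L^q(ℝ^d)`. -/
theorem S2_bounded_Lq (d : ℕ) (q s : ℝ) (hq : 1 < q) (hs : 0 < s)
    (hsd : s < (d : ℝ) - (d : ℝ) / q) :
    ∃ C : ℝ, 0 < C ∧ ∀ g : EuclideanSpace ℝ (Fin d) → ℝ,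
      MeasureTheory.MemLp g (ENNReal.ofReal q) volume →
      ∫⁻ x : EuclideanSpace ℝ (Fin d),
          (∫⁻ y in {y : EuclideanSpace ℝ (Fin d) | ‖y‖ ≤ ‖x‖ / 2},
            (‖g y‖₊ : ℝ≥0∞) /
              ((‖y‖₊ : ℝ≥0∞) ^ s * (‖x - y‖₊ : ℝ≥0∞) ^ ((d : ℝ) - s))) ^ q ≤
        ENNReal.ofReal C * ∫⁻ x : EuclideanSpace ℝ (Fin d), (‖g x‖₊ : ℝ≥0∞) ^ q := by
  have hd : 0 < d := Nat.pos_of_ne_zero fun h => by subst h; simp at hsd; linarith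
  have : Nontrivial (EuclideanSpace ℝ (Fin d)) :=
    Module.nontrivial_of_finrank_pos (R := ℝ) (by simpa using hd)
  obtain ⟨C, hC, hS2⟩ := exists_lintegral_S2_rpow_le (volume : Measure (EuclideanSpace ℝ (Fin d)))
    hq hs.le (by simpa using hsd)
  refine ⟨C.toReal + 1, by positivity, fun g hg => ?_⟩
  have hCle : C ≤ ENNReal.ofReal (C.toReal + 1) := by
    rw [ENNReal.ofReal_add ENNReal.toReal_nonneg zero_le_one, ENNReal.ofReal_toReal hC]
    exact le_self_add
  simpa [← enorm_eq_nnnorm] using (hS2 _ hg.1.enorm).trans (mul_le_mul_left hCle _)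
end
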